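/- Let Θ : U → ℂ be holomorphic on an open set U ⊆ ℂ⁴ and suppose Θ satisfies the second Plebanski (heavenly) equation P(Θ) = 0 on U. Then the pair Θ₀ := −∂Θ/∂y, Θ₁ := ∂Θ/∂x satisfies the hyper-Hermitian equation E₀ = E₁ = 0 on U, and moreover ∂Θ₀/∂x + ∂Θ₁/∂y = 0 on U. -/

import Mathlib

noncomputable section

/-- Points of `ℂ⁴`, with coordinates `p = (x, y, w, z)`. -/
abbrev V4 : Type := ℂ × ℂ × ℂ × ℂ

/-- Coordinate directions. -/
def eX : V4 := (1, 0, 0, 0)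
def eY : V4 := (0, 1, 0, 0)
def eW : V4 := (0, 0, 1, 0)
def eZ : V4 := (0, 0, 0, 1)

/-- Directional (partial) derivative of `f` along the constant direction `v`. -/
def pd (v : V4) (f : V4 → ℂ) : V4 → ℂ := fun p => fderiv ℂ f p v

/-- The hyper-Hermitian expression
`E_C = ∂²Θ_C/∂x∂w + ∂²Θ_C/∂y∂z + (∂Θ₀/∂x − ∂Θ₁/∂y)·∂²Θ_C/∂x∂y
      + (∂Θ₁/∂x)·∂²Θ_C/∂y² − (∂Θ₀/∂y)·∂²Θ_C/∂x²`. -/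
def hhE (Θ0 Θ1 ΘC : V4 → ℂ) : V4 → ℂ := fun p =>
  pd eX (pd eW ΘC) p + pd eY (pd eZ ΘC) p
    + (pd eX Θ0 p - pd eY Θ1 p) * pd eX (pd eY ΘC) p
    + pd eX Θ1 p * pd eY (pd eY ΘC) p
    - pd eY Θ0 p * pd eX (pd eX ΘC) p


/-- The second Plebanski expression
`P(Θ) := ∂²Θ/∂x∂w + ∂²Θ/∂y∂z + (∂²Θ/∂x²)(∂²Θ/∂y²) − (∂²Θ/∂x∂y)²`. -/
def pleb (Θ : V4 → ℂ) : V4 → ℂ := fun p =>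
  pd eX (pd eW Θ) p + pd eY (pd eZ Θ) p
    + pd eX (pd eX Θ) p * pd eY (pd eY Θ) p
    - (pd eX (pd eY Θ) p) ^ 2

/-! Differentiating the Plebanski expression gives, once mixed third partials of `Θ` are
commuted (Schwarz's theorem, available since `Θ` is analytic),
`E₀ = -∂P(Θ)/∂y` and `E₁ = ∂P(Θ)/∂x` for `Θ₀ = -∂Θ/∂y`, `Θ₁ = ∂Θ/∂x`. Since `P(Θ)` vanishes on
the open set `U`, so do its partial derivatives. The divergence condition
`∂Θ₀/∂x + ∂Θ₁/∂y = 0` is the symmetry of `∂²Θ/∂x∂y`. -/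

open Filter Topology

lemma pd_congr_of_eventuallyEq {f g : V4 → ℂ} {p : V4} (h : f =ᶠ[𝓝 p] g) (v : V4) :
    pd v f p = pd v g p := by
  simp only [pd, h.fderiv_eq]

lemma pd_eq_zero_of_eqOn_zero {f : V4 → ℂ} {U : Set V4} (hU : IsOpen U)
    (hf : Set.EqOn f 0 U) {p : V4} (hp : p ∈ U) (v : V4) : pd v f p = 0 := by
  rw [pd_congr_of_eventuallyEq (eventuallyEq_of_mem (hU.mem_nhds hp) hf)]
  simp [pd]

lemma pd_neg (v : V4) (f : V4 → ℂ) : pd v (fun q => -f q) = fun p => -pd v f p := by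
  ext p
  simp only [pd, fderiv_fun_neg, neg_apply]

lemma analyticAt_pd {f : V4 → ℂ} {p : V4} (hf : AnalyticAt ℂ f p) (v : V4) :
    AnalyticAt ℂ (pd v f) p :=
  ((ContinuousLinearMap.apply ℂ ℂ v).analyticAt _).comp hf.fderiv

lemma pd_pd_eq_fderiv_fderiv {f : V4 → ℂ} {p : V4}
    (hf : DifferentiableAt ℂ (fderiv ℂ f) p) (v w : V4) :
    pd v (pd w f) p = fderiv ℂ (fderiv ℂ f) p v w := by
  change fderiv ℂ (fun q => fderiv ℂ f q w) p v = _
  simp [fderiv_clm_apply hf (differentiableAt_const w)]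

lemma AnalyticAt.pd_comm {f : V4 → ℂ} {p : V4} (hf : AnalyticAt ℂ f p) (v w : V4) :
    pd v (pd w f) p = pd w (pd v f) p := by
  have hf' := hf.fderiv.differentiableAt
  rw [pd_pd_eq_fderiv_fderiv hf', pd_pd_eq_fderiv_fderiv hf']
  exact (hf.contDiffAt (n := 2)).isSymmSndFDerivAt
    (by simp [minSmoothness_of_isRCLikeNormedField]) v w

lemma AnalyticAt.pd_pd_comm {f : V4 → ℂ} {p : V4} (hf : AnalyticAt ℂ f p) (u v w : V4) :
    pd u (pd v (pd w f)) p = pd u (pd w (pd v f)) p :=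
  pd_congr_of_eventuallyEq (hf.eventually_analyticAt.mono fun _ hq => hq.pd_comm v w) u

lemma pd_pleb {Θ : V4 → ℂ} {p : V4} (hΘ : AnalyticAt ℂ Θ p) (v : V4) :
    pd v (pleb Θ) p = pd v (pd eX (pd eW Θ)) p + pd v (pd eY (pd eZ Θ)) p
      + (pd v (pd eX (pd eX Θ)) p * pd eY (pd eY Θ) p
        + pd eX (pd eX Θ) p * pd v (pd eY (pd eY Θ)) p)
      - 2 * pd eX (pd eY Θ) p * pd v (pd eX (pd eY Θ)) p := by
  have d : ∀ a b, DifferentiableAt ℂ (pd a (pd b Θ)) p := fun a b =>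
    (analyticAt_pd (analyticAt_pd hΘ b) a).differentiableAt
  have H : HasFDerivAt (pleb Θ) _ p := (((d eX eW).hasFDerivAt.add (d eY eZ).hasFDerivAt).add
    ((d eX eX).hasFDerivAt.mul (d eY eY).hasFDerivAt)).sub ((d eX eY).hasFDerivAt.pow 2)
  change fderiv ℂ (pleb Θ) p v = _
  rw [H.fderiv]
  simp only [pd, sub_apply, add_apply, smul_apply, smul_eq_mul]
  ring

lemma hhE_neg_pdY_eq_neg_pd_pleb {Θ : V4 → ℂ} {p : V4} (hΘ : AnalyticAt ℂ Θ p) :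
    hhE (fun q => -pd eY Θ q) (pd eX Θ) (fun q => -pd eY Θ q) p = -pd eY (pleb Θ) p := by
  rw [pd_pleb hΘ]
  simp only [hhE, pd_neg]
  rw [hΘ.pd_pd_comm eX eW eY, (analyticAt_pd hΘ eW).pd_comm eX eY, hΘ.pd_pd_comm eY eZ eY,
    hΘ.pd_comm eY eX, (analyticAt_pd hΘ eY).pd_comm eX eY, hΘ.pd_pd_comm eX eX eY,
    (analyticAt_pd hΘ eX).pd_comm eX eY]
  ring

lemma hhE_pdX_eq_pd_pleb {Θ : V4 → ℂ} {p : V4} (hΘ : AnalyticAt ℂ Θ p) :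
    hhE (fun q => -pd eY Θ q) (pd eX Θ) (pd eX Θ) p = pd eX (pleb Θ) p := by
  rw [pd_pleb hΘ]
  simp only [hhE, pd_neg]
  rw [hΘ.pd_pd_comm eX eW eX, hΘ.pd_pd_comm eY eZ eX, (analyticAt_pd hΘ eZ).pd_comm eY eX,
    hΘ.pd_pd_comm eX eY eX, hΘ.pd_pd_comm eY eY eX, (analyticAt_pd hΘ eY).pd_comm eY eX,
    hΘ.pd_comm eY eX]
  ring

lemma pd_neg_pdY_add_pd_pdX {Θ : V4 → ℂ} {p : V4} (hΘ : AnalyticAt ℂ Θ p) :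
    pd eX (fun q => -pd eY Θ q) p + pd eY (pd eX Θ) p = 0 := by
  rw [pd_neg, hΘ.pd_comm eY eX]
  ring

/-- if a holomorphic `Θ` satisfies the second Plebanski equation
`P(Θ) = 0` on `U`, then the pair `Θ₀ := −∂Θ/∂y`, `Θ₁ := ∂Θ/∂x` satisfies the
hyper-Hermitian equation `E₀ = E₁ = 0` on `U`, and `∂Θ₀/∂x + ∂Θ₁/∂y = 0` on `U`. -/
theorem plebanski_solution_gives_hyperHermitian
    (U : Set V4) (hU : IsOpen U) (Θ : V4 → ℂ)
    (hΘ : ∀ p ∈ U, AnalyticAt ℂ Θ p)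
    (hP : ∀ p ∈ U, pleb Θ p = 0) :
    ∀ p ∈ U,
      hhE (fun q => -(pd eY Θ q)) (pd eX Θ) (fun q => -(pd eY Θ q)) p = 0 ∧
      hhE (fun q => -(pd eY Θ q)) (pd eX Θ) (pd eX Θ) p = 0 ∧
      pd eX (fun q => -(pd eY Θ q)) p + pd eY (pd eX Θ) p = 0 := by
  intro p hp
  have hPx := pd_eq_zero_of_eqOn_zero hU hP hp eX
  have hPy := pd_eq_zero_of_eqOn_zero hU hP hp eY
  refine ⟨?_, ?_, pd_neg_pdY_add_pd_pdX (hΘ p hp)⟩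
  · rw [hhE_neg_pdY_eq_neg_pd_pleb (hΘ p hp), hPy, neg_zero]
  · rw [hhE_pdX_eq_pd_pleb (hΘ p hp), hPx]
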